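/- For every non-trivial rule word w, the map T_w has no periodic points: there is no configuration (C,p,d) and no T > 0 with T_w^T(C,p,d) = (C,p,d). -/

import Mathlib

/-!
On a periodic orbit the ant visits finitely many cells; let `M` be the topmost, then rightmost,
of them. The ant can only enter `M` heading north or east and must leave it heading west or
south, so at a visit where it turns left it entered heading north, and at one where it turns
right it entered heading east. Every visit increments the symbol at `M`, so by periodicity `M`
is visited with every symbol, in particular with an `L` and with an `R` symbol. But the parity
of `x + y` at the ant's position and the axis of its direction both flip at every step, so the
ant enters a fixed cell always along the same axis: contradiction.
-/

/-- Cells of the grid `ℤ²`. -/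
abbrev Cell : Type := ℤ × ℤ

/-- The two letters of a rule word. -/
inductive Letter : Type
  | L | R
deriving DecidableEq

/-- The four unit directions of `ℤ²` (the state set `Q`). -/
inductive Dir : Type
  | E | N | W | S
deriving DecidableEq

/-- Rotation by 90° counterclockwise. -/
def Dir.left : Dir → Dir
  | .E => .N | .N => .W | .W => .S | .S => .E

/-- Rotation by 90° clockwise. -/
def Dir.right : Dir → Dir
  | .E => .S | .S => .W | .W => .N | .N => .E

/-- The unit vector of a direction. -/
def Dir.vec : Dir → Cell
  | .E => (1, 0) | .N => (0, 1) | .W => (-1, 0) | .S => (0, -1)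

/-- Configurations: a picture `ℤ² → ℤ/nℤ`, a position and a direction. -/
abbrev Config (n : ℕ) : Type := (Cell → ZMod n) × Cell × Dir

/-- One step of the generalised ant with rule word `w ∈ {L,R}⁺`:
the symbol under the ant is increased by `1 (mod |w|)`, the ant turns left or
right according to the letter `w_{C(p)}`, and moves one step in its new direction. -/
def antStepW (w : List Letter) (cfg : Config w.length) : Config w.length :=
  let C := cfg.1
  let p := cfg.2.1
  let d' := if w.getD (C p).val Letter.L = Letter.L then cfg.2.2.left else cfg.2.2.right
  (Function.update C p (C p + 1), p + d'.vec, d')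

namespace Function.IsPeriodicPt

variable {α β : Type*} [LinearOrder β] {f : α → α} {x : α} {T : ℕ}

theorem exists_forall_apply_iterate_le (hT : 0 < T) (hx : IsPeriodicPt f T x) (g : α → β) :
    ∃ y, IsPeriodicPt f T y ∧ ∀ s, g (f^[s] y) ≤ g y := by
  obtain ⟨t, -, ht⟩ := (Finset.range T).exists_max_image (fun s => g (f^[s] x))
    ⟨0, Finset.mem_range.2 hT⟩
  refine ⟨f^[t] x, hx.apply_iterate t, fun s => ?_⟩
  rw [← iterate_add_apply, ← hx.iterate_mod_apply]
  exact ht _ (Finset.mem_range.2 (Nat.mod_lt _ hT))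

end Function.IsPeriodicPt

namespace Dir

def isNorthOrEast : Dir → Bool
  | .N | .E => true
  | .W | .S => false

def axis : Dir → ZMod 2
  | .E | .W => 0
  | .N | .S => 1

theorem axis_left (d : Dir) : d.left.axis = d.axis + 1 := by cases d <;> decide

theorem axis_right (d : Dir) : d.right.axis = d.axis + 1 := by cases d <;> decide

theorem vec_fst_add_snd (d : Dir) : ((d.vec.1 + d.vec.2 : ℤ) : ZMod 2) = 1 := by
  cases d <;> decide

theorem eq_N_of_isNorthOrEast_of_left {d : Dir} (hd : d.isNorthOrEast)
    (hl : d.left.isNorthOrEast = false) : d = .N := by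
  cases d <;> simp_all [isNorthOrEast, left]

theorem eq_E_of_isNorthOrEast_of_right {d : Dir} (hd : d.isNorthOrEast)
    (hr : d.right.isNorthOrEast = false) : d = .E := by
  cases d <;> simp_all [isNorthOrEast, right]

end Dir

def topRightKey (q : Cell) : ℤ ×ₗ ℤ := toLex (q.2, q.1)

theorem topRightKey_lt_add_vec (q : Cell) {d : Dir} (hd : d.isNorthOrEast) :
    topRightKey q < topRightKey (q + d.vec) := by
  cases d <;> simp_all [Dir.isNorthOrEast, topRightKey, Dir.vec, Prod.Lex.toLex_lt_toLex]

theorem topRightKey_add_vec_lt (q : Cell) {d : Dir} (hd : d.isNorthOrEast = false) :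
    topRightKey (q + d.vec) < topRightKey q := by
  cases d <;> simp_all [Dir.isNorthOrEast, topRightKey, Dir.vec, Prod.Lex.toLex_lt_toLex]

def chirality {n : ℕ} (c : Config n) : ZMod 2 :=
  c.2.2.axis + ((c.2.1.1 + c.2.1.2 : ℤ) : ZMod 2)

section antStepW

variable (w : List Letter)

theorem antStepW_fst_self (c : Config w.length) :
    (antStepW w c).1 c.2.1 = c.1 c.2.1 + 1 :=
  Function.update_self _ _ _

theorem antStepW_fst_of_ne {c : Config w.length} {q : Cell} (hq : q ≠ c.2.1) :
    (antStepW w c).1 q = c.1 q :=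
  Function.update_of_ne hq _ _

theorem antStepW_pos (c : Config w.length) :
    (antStepW w c).2.1 = c.2.1 + (antStepW w c).2.2.vec :=
  rfl

theorem antStepW_dir_of_L {c : Config w.length} (h : w.getD (c.1 c.2.1).val .L = .L) :
    (antStepW w c).2.2 = c.2.2.left :=
  if_pos h

theorem antStepW_dir_of_R {c : Config w.length} (h : w.getD (c.1 c.2.1).val .L = .R) :
    (antStepW w c).2.2 = c.2.2.right :=
  if_neg (by rw [h]; decide)

theorem chirality_antStepW (c : Config w.length) : chirality (antStepW w c) = chirality c := by
  have hdir : (antStepW w c).2.2.axis = c.2.2.axis + 1 := by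
    cases h : w.getD (c.1 c.2.1).val .L with
    | L => rw [antStepW_dir_of_L w h, Dir.axis_left]
    | R => rw [antStepW_dir_of_R w h, Dir.axis_right]
  have hpos : ((((antStepW w c).2.1.1 + (antStepW w c).2.1.2 : ℤ)) : ZMod 2)
      = ((c.2.1.1 + c.2.1.2 : ℤ) : ZMod 2) + 1 := by
    rw [antStepW_pos, Prod.fst_add, Prod.snd_add, add_add_add_comm, Int.cast_add,
      Dir.vec_fst_add_snd]
  rw [chirality, chirality, hdir, hpos, add_add_add_comm, (by decide : (1 : ZMod 2) + 1 = 0),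
    add_zero]

theorem chirality_iterate_antStepW (c : Config w.length) (m : ℕ) :
    chirality ((antStepW w)^[m] c) = chirality c := by
  induction m with
  | zero => rfl
  | succ m ih => rw [Function.iterate_succ_apply', chirality_antStepW, ih]

theorem iterate_antStepW_fst_of_forall_ne {c : Config w.length} {q : Cell} {m : ℕ}
    (hq : ∀ j < m, ((antStepW w)^[j] c).2.1 ≠ q) : ((antStepW w)^[m] c).1 q = c.1 q := by
  induction m with
  | zero => rfl
  | succ m ih =>
    rw [Function.iterate_succ_apply', antStepW_fst_of_ne w (hq m m.lt_succ_self).symm,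
      ih fun j hj => hq j (hj.trans m.lt_succ_self)]

variable {w} {T : ℕ}

/-- At the first return of the ant to its cell, the symbol there has been increased exactly once. -/
theorem exists_return_fst_eq_add_one (hT : 0 < T) {c : Config w.length}
    (hc : Function.IsPeriodicPt (antStepW w) T c) :
    ∃ m, ((antStepW w)^[m] c).2.1 = c.2.1 ∧ ((antStepW w)^[m] c).1 c.2.1 = c.1 c.2.1 + 1 := by
  have hret : ∃ m, ((antStepW w)^[m] (antStepW w c)).2.1 = c.2.1 :=
    ⟨T - 1, by
      rw [← Function.iterate_succ_apply, Nat.succ_eq_add_one, Nat.sub_add_cancel hT, hc.eq]⟩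
  refine ⟨Nat.find hret + 1, ?_, ?_⟩
  · rw [Function.iterate_succ_apply]; exact Nat.find_spec hret
  · rw [Function.iterate_succ_apply, iterate_antStepW_fst_of_forall_ne w
      fun j hj => Nat.find_min hret hj, antStepW_fst_self]

theorem exists_iterate_fst_eq [NeZero w.length] (hT : 0 < T) {c : Config w.length}
    (hc : Function.IsPeriodicPt (antStepW w) T c) (z : ZMod w.length) :
    ∃ m, ((antStepW w)^[m] c).2.1 = c.2.1 ∧ ((antStepW w)^[m] c).1 c.2.1 = z := by
  have hsteps : ∀ k : ℕ, ∃ m, ((antStepW w)^[m] c).2.1 = c.2.1 ∧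
      ((antStepW w)^[m] c).1 c.2.1 = c.1 c.2.1 + k := by
    intro k
    induction k with
    | zero => exact ⟨0, rfl, by simp⟩
    | succ k ih =>
      obtain ⟨m, hpos, hcol⟩ := ih
      obtain ⟨m', hpos', hcol'⟩ := exists_return_fst_eq_add_one hT (hc.apply_iterate m)
      refine ⟨m' + m, ?_, ?_⟩
      · rw [Function.iterate_add_apply, hpos', hpos]
      · rw [Function.iterate_add_apply, ← hpos, hcol', hpos, hcol]; push_cast; ring
  obtain ⟨m, hpos, hcol⟩ := hsteps (z - c.1 c.2.1).val
  exact ⟨m, hpos, by rw [hcol, ZMod.natCast_zmod_val, add_sub_cancel]⟩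

theorem exists_iterate_letter_eq [NeZero w.length] (hT : 0 < T) {c : Config w.length}
    (hc : Function.IsPeriodicPt (antStepW w) T c) {a : Letter} (ha : a ∈ w) :
    ∃ m, ((antStepW w)^[m] c).2.1 = c.2.1 ∧
      w.getD (((antStepW w)^[m] c).1 c.2.1).val .L = a := by
  obtain ⟨i, hi, rfl⟩ := List.mem_iff_getElem.mp ha
  obtain ⟨m, hpos, hcol⟩ := exists_iterate_fst_eq hT hc (i : ZMod w.length)
  exact ⟨m, hpos, by rw [hcol, ZMod.val_cast_of_lt hi, List.getD_eq_getElem _ _ hi]⟩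

-- The cells north and east of the top-right visited cell are never visited.
theorem isNorthOrEast_of_pos_eq_top (hT : 0 < T) {c : Config w.length}
    (hc : Function.IsPeriodicPt (antStepW w) T c)
    (htop : ∀ s, topRightKey ((antStepW w)^[s] c).2.1 ≤ topRightKey c.2.1)
    {m : ℕ} (hm : ((antStepW w)^[m] c).2.1 = c.2.1) :
    ((antStepW w)^[m] c).2.2.isNorthOrEast ∧
      ((antStepW w)^[m + 1] c).2.2.isNorthOrEast = false := by
  constructor
  · have hprev : (antStepW w)^[m] c = antStepW w ((antStepW w)^[m + T - 1] c) := by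
      rw [← Function.iterate_succ_apply' (antStepW w), Nat.succ_eq_add_one,
        Nat.sub_add_cancel (by omega), Function.iterate_add_apply, hc.eq]
    by_contra hd
    have hlt := topRightKey_add_vec_lt ((antStepW w)^[m + T - 1] c).2.1
      (Bool.eq_false_iff.mpr hd)
    rw [hprev, ← antStepW_pos, ← hprev, hm] at hlt
    exact (htop _).not_gt hlt
  · have hnext : ((antStepW w)^[m + 1] c).2.1 = c.2.1 + ((antStepW w)^[m + 1] c).2.2.vec := by
      rw [Function.iterate_succ_apply', antStepW_pos, hm]
    rw [Bool.eq_false_iff]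
    intro hd
    have hlt := topRightKey_lt_add_vec c.2.1 hd
    rw [← hnext] at hlt
    exact (htop _).not_gt hlt

end antStepW

/-- For every non-trivial rule word `w`, the map `T_w` has no
periodic points. -/
theorem ant_no_periodic_points (w : List Letter)
    (hL : Letter.L ∈ w) (hR : Letter.R ∈ w) :
    ¬ ∃ (cfg : Config w.length) (T : ℕ), 0 < T ∧ (antStepW w)^[T] cfg = cfg := by
  rintro ⟨cfg, T, hT, hper⟩
  have : NeZero w.length := ⟨(List.length_pos_of_mem hL).ne'⟩
  obtain ⟨c, hc, htop⟩ :=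
    Function.IsPeriodicPt.exists_forall_apply_iterate_le hT hper (fun c => topRightKey c.2.1)
  obtain ⟨mL, hposL, hletL⟩ := exists_iterate_letter_eq hT hc hL
  obtain ⟨mR, hposR, hletR⟩ := exists_iterate_letter_eq hT hc hR
  have hN : ((antStepW w)^[mL] c).2.2 = .N := by
    obtain ⟨hin, hout⟩ := isNorthOrEast_of_pos_eq_top hT hc htop hposL
    rw [Function.iterate_succ_apply', antStepW_dir_of_L w (hposL ▸ hletL)] at hout
    exact Dir.eq_N_of_isNorthOrEast_of_left hin hout
  have hE : ((antStepW w)^[mR] c).2.2 = .E := by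
    obtain ⟨hin, hout⟩ := isNorthOrEast_of_pos_eq_top hT hc htop hposR
    rw [Function.iterate_succ_apply', antStepW_dir_of_R w (hposR ▸ hletR)] at hout
    exact Dir.eq_E_of_isNorthOrEast_of_right hin hout
  have hchir := (chirality_iterate_antStepW w c mL).trans (chirality_iterate_antStepW w c mR).symm
  rw [chirality, chirality, hposL, hposR, hN, hE, add_left_inj] at hchir
  exact absurd hchir (by decide)
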